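/- arXiv:2301.05981 — 2 statements merged into one kernel-verified Lean document; each statement's English description precedes it below -/
import Mathlib

section
/- For a bounded random variable Z and α ∈ (0,1), the supremum in CVaR_α[Z] = sup_{η ∈ ℝ} { η − (1/α)·E[(η − Z)₊] } is attained at η* = VaR_α[Z] := inf{ v ∈ ℝ : P(Z ≤ v) ≥ α }. -/
/-!
Write `I η = E[(η - Z)₊]`. This is a convex function of `η` whose one-sided slopes at `q` are
`P(Z < q)` and `P(Z ≤ q)`. At the lower `α`-quantile `q = VaR_α[Z]` one has
`P(Z < q) ≤ α ≤ P(Z ≤ q)` (left limit and right continuity of the distribution function), so `α`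
is a subgradient of `I` at `q`: `I η ≥ I q + α (η - q)` for every `η`. Dividing by `α`, this says
exactly that `q` maximizes `η - I η / α`.
-/

open MeasureTheory

/-- Lower-tail conditional value-at-risk at level `α`. -/
noncomputable def cvar {Ω : Type*} [MeasurableSpace Ω] (μ : Measure Ω) (α : ℝ)
    (Z : Ω → ℝ) : ℝ :=
  ⨆ η : ℝ, (η - (1 / α) * ∫ ω, max (η - Z ω) 0 ∂μ)

/-- The value-at-risk (lower α-quantile): `VaR_α[Z] = inf { v : P(Z ≤ v) ≥ α }`. -/
noncomputable def valueAtRisk {Ω : Type*} [MeasurableSpace Ω] (μ : Measure Ω) (α : ℝ)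
    (Z : Ω → ℝ) : ℝ :=
  sInf {v : ℝ | α ≤ (μ {ω | Z ω ≤ v}).toReal}

open Set Filter Topology ProbabilityTheory

noncomputable def cvarObjective {Ω : Type*} [MeasurableSpace Ω] (μ : Measure Ω) (α : ℝ)
    (Z : Ω → ℝ) (η : ℝ) : ℝ :=
  η - (1 / α) * ∫ ω, max (η - Z ω) 0 ∂μ

section Quantile

variable {ν : Measure ℝ} {α : ℝ}

lemma bddBelow_setOf_le_cdf (hα : 0 < α) : BddBelow {v | α ≤ cdf ν v} := by
  obtain ⟨b, hb⟩ := eventually_atBot.1 ((tendsto_cdf_atBot ν).eventually (gt_mem_nhds hα))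
  exact ⟨b, fun v hv => le_of_not_ge fun hvb => (hb v hvb).not_ge hv⟩

lemma nonempty_setOf_le_cdf (hα : α < 1) : {v | α ≤ cdf ν v}.Nonempty :=
  (((tendsto_cdf_atTop ν).eventually (lt_mem_nhds hα)).exists).imp fun _ => le_of_lt

lemma le_cdf_sInf_setOf_le_cdf (hα : α ∈ Ioo 0 1) :
    α ≤ cdf ν (sInf {v | α ≤ cdf ν v}) := by
  set q := sInf {v | α ≤ cdf ν v}
  have hright : ∀ v ∈ Ioi q, α ≤ cdf ν v := fun v hv => by
    obtain ⟨w, hw, hwv⟩ := exists_lt_of_csInf_lt (nonempty_setOf_le_cdf hα.2) hv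
    exact hw.trans (monotone_cdf ν hwv.le)
  exact ge_of_tendsto (((cdf ν).right_continuous q).mono Ioi_subset_Ici_self)
    (eventually_nhdsWithin_of_forall hright)

lemma measureReal_Iio_sInf_setOf_le_cdf_le [IsProbabilityMeasure ν] (hα : 0 < α) :
    ν.real (Iio (sInf {v | α ≤ cdf ν v})) ≤ α := by
  set q := sInf {v | α ≤ cdf ν v}
  have hleft : ∀ v ∈ Iio q, cdf ν v ≤ α := fun v (hv : v < q) =>
    (not_le.1 (notMem_of_lt_csInf (s := {v | α ≤ cdf ν v}) hv (bddBelow_setOf_le_cdf hα))).le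
  have hlim : ν.real (Iio q) = Function.leftLim (cdf ν) q := by
    have h := (cdf ν).measure_Iio (tendsto_cdf_atBot ν) q
    rw [measure_cdf, sub_zero] at h
    rw [measureReal_def, h,
      ENNReal.toReal_ofReal ((cdf_nonneg ν _).trans ((monotone_cdf ν).le_leftLim (sub_one_lt q)))]
  rw [hlim]
  exact le_of_tendsto ((monotone_cdf ν).tendsto_leftLim q) (eventually_nhdsWithin_of_forall hleft)

end Quantile

section RandomVariable

variable {Ω : Type*} [MeasurableSpace Ω] {μ : Measure Ω} {α : ℝ} {Z : Ω → ℝ} {η₀ : ℝ}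

lemma cdf_map_eq_measureReal [IsProbabilityMeasure μ] (hZ : Measurable Z) (v : ℝ) :
    cdf (μ.map Z) v = μ.real {ω | Z ω ≤ v} := by
  have := Measure.isProbabilityMeasure_map (μ := μ) hZ.aemeasurable
  rw [cdf_eq_real, map_measureReal_apply hZ measurableSet_Iic]
  rfl

lemma valueAtRisk_eq_sInf_cdf [IsProbabilityMeasure μ] (hZ : Measurable Z) :
    valueAtRisk μ α Z = sInf {v | α ≤ cdf (μ.map Z) v} := by
  simp only [valueAtRisk, cdf_map_eq_measureReal hZ, measureReal_def]

lemma le_measureReal_le_valueAtRisk [IsProbabilityMeasure μ] (hZ : Measurable Z)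
    (hα : α ∈ Ioo 0 1) :
    α ≤ μ.real {ω | Z ω ≤ valueAtRisk μ α Z} := by
  have := Measure.isProbabilityMeasure_map (μ := μ) hZ.aemeasurable
  rw [← cdf_map_eq_measureReal hZ, valueAtRisk_eq_sInf_cdf hZ]
  exact le_cdf_sInf_setOf_le_cdf hα

lemma measureReal_lt_valueAtRisk_le [IsProbabilityMeasure μ] (hZ : Measurable Z) (hα : 0 < α) :
    μ.real {ω | Z ω < valueAtRisk μ α Z} ≤ α := by
  have := Measure.isProbabilityMeasure_map (μ := μ) hZ.aemeasurable
  rw [valueAtRisk_eq_sInf_cdf hZ]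
  have := measureReal_Iio_sInf_setOf_le_cdf_le (ν := μ.map Z) hα
  rwa [map_measureReal_apply hZ measurableSet_Iio] at this

lemma integral_max_sub_add_mul_measureReal_le [IsFiniteMeasure μ] (hZ : Integrable Z μ)
    {A : Set Ω} (hA : MeasurableSet A) (hlt : ∀ ω, Z ω < η₀ → ω ∈ A) (hle : ∀ ω ∈ A, Z ω ≤ η₀)
    (η : ℝ) :
    ∫ ω, max (η₀ - Z ω) 0 ∂μ + (η - η₀) * μ.real A ≤ ∫ ω, max (η - Z ω) 0 ∂μ := by
  have hint : ∀ c : ℝ, Integrable (fun ω => max (c - Z ω) 0) μ :=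
    fun c => ((integrable_const c).sub hZ).pos_part
  have hpointwise :
      ∀ ω, max (η₀ - Z ω) 0 + A.indicator (fun _ => η - η₀) ω ≤ max (η - Z ω) 0 := by
    intro ω
    by_cases hω : ω ∈ A
    · have := hle ω hω
      rw [indicator_of_mem hω, max_eq_left (sub_nonneg.2 this)]
      linarith [le_max_left (η - Z ω) 0]
    · have := not_lt.1 (mt (hlt ω) hω)
      rw [indicator_of_notMem hω, max_eq_right (sub_nonpos.2 this)]
      simp
  calc ∫ ω, max (η₀ - Z ω) 0 ∂μ + (η - η₀) * μ.real A
      = ∫ ω, (max (η₀ - Z ω) 0 + A.indicator (fun _ => η - η₀) ω) ∂μ := by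
        rw [integral_add (hint η₀) ((integrable_const _).indicator hA),
          integral_indicator_const _ hA, smul_eq_mul, mul_comm]
    _ ≤ ∫ ω, max (η - Z ω) 0 ∂μ :=
        integral_mono ((hint η₀).add ((integrable_const _).indicator hA)) (hint η) hpointwise

lemma integral_max_sub_add_mul_le [IsFiniteMeasure μ] (hZm : Measurable Z) (hZ : Integrable Z μ)
    (hlt : μ.real {ω | Z ω < η₀} ≤ α) (hle : α ≤ μ.real {ω | Z ω ≤ η₀}) (η : ℝ) :
    ∫ ω, max (η₀ - Z ω) 0 ∂μ + α * (η - η₀) ≤ ∫ ω, max (η - Z ω) 0 ∂μ := by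
  rcases le_total η η₀ with hη | hη
  · have h := integral_max_sub_add_mul_measureReal_le (μ := μ) hZ (A := {ω | Z ω < η₀})
      (hZm measurableSet_Iio) (fun _ => id) (fun _ h => le_of_lt h) η
    nlinarith
  · have h := integral_max_sub_add_mul_measureReal_le (μ := μ) hZ (A := {ω | Z ω ≤ η₀})
      (hZm measurableSet_Iic) (fun _ h => le_of_lt h) (fun _ => id) η
    nlinarith

lemma cvar_eq_cvarObjective_of_forall_le
    (h : ∀ η, cvarObjective μ α Z η ≤ cvarObjective μ α Z η₀) :
    cvar μ α Z = cvarObjective μ α Z η₀ :=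
  le_antisymm (ciSup_le h) (le_ciSup ⟨_, forall_mem_range.2 h⟩ η₀)

lemma cvarObjective_le_of_integral_le (hα : 0 < α) {η : ℝ}
    (h : ∫ ω, max (η₀ - Z ω) 0 ∂μ + α * (η - η₀) ≤ ∫ ω, max (η - Z ω) 0 ∂μ) :
    cvarObjective μ α Z η ≤ cvarObjective μ α Z η₀ := by
  have := mul_le_mul_of_nonneg_left h (one_div_pos.2 hα).le
  rw [mul_add, ← mul_assoc, one_div_mul_cancel hα.ne', one_mul] at this
  unfold cvarObjective
  linarith

end RandomVariable

/-- The supremum defining `CVaR_α[Z]` is attained at `η* = VaR_α[Z]`. -/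
theorem cvar_attained_at_var {Ω : Type*} [MeasurableSpace Ω] (μ : Measure Ω)
    [IsProbabilityMeasure μ] (α : ℝ) (hα : α ∈ Set.Ioo (0 : ℝ) 1)
    (Z : Ω → ℝ) (hm : Measurable Z) (hb : ∃ C, ∀ ω, |Z ω| ≤ C) :
    cvar μ α Z =
      valueAtRisk μ α Z -
        (1 / α) * ∫ ω, max (valueAtRisk μ α Z - Z ω) 0 ∂μ := by
  obtain ⟨C, hC⟩ := hb
  have hZ : Integrable Z μ := .of_bound hm.aestronglyMeasurable C (ae_of_all _ hC)
  refine cvar_eq_cvarObjective_of_forall_le fun η => cvarObjective_le_of_integral_le hα.1 ?_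
  exact integral_max_sub_add_mul_le hm hZ (measureReal_lt_valueAtRisk_le hm hα.1)
    (le_measureReal_le_valueAtRisk hm hα) η
end

section
/- The risk-averse Bellman operator T, defined on bounded functions Q : S × H × A × H → ℝ by (TQ)(s, η, a, η′) = −(λ/α)·(η − r(s,a))₊ + (1−λ)·r(s,a) + γ·λ·η′ + γ·Σ_{s′} P(s′ | s, a) · max_{a′, η″} Q(s′, η′, a′, η″), is a γ-contraction in the supremum norm: ‖TQ₁ − TQ₂‖_∞ ≤ γ·‖Q₁ − Q₂‖_∞. -/
open Finset

/-- The risk-averse Bellman operator on functions `Q : S × H × A × H → ℝ`, where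
`H` is a finite set of real auxiliary values `η`. -/
noncomputable def riskBellman {S A : Type*} [Fintype S] [Fintype A] [Nonempty A]
    (H : Finset ℝ) (P : S → A → S → ℝ) (r : S → A → ℝ) (γ lam α : ℝ)
    (Q : S → H → A → H → ℝ) : S → H → A → H → ℝ :=
  fun s η a η' =>
    -(lam / α) * max ((η : ℝ) - r s a) 0 + (1 - lam) * r s a + γ * lam * (η' : ℝ) +
      γ * ∑ s' : S, P s a s' * ⨆ p : A × H, Q s' η' p.1 p.2

/-- The risk-averse Bellman operator is a `γ`-contraction in the sup-norm. -/
theorem riskBellman_contraction {S A : Type*} [Fintype S] [Fintype A]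
    [Nonempty S] [Nonempty A] (H : Finset ℝ) (hH : H.Nonempty)
    (P : S → A → S → ℝ) (hP0 : ∀ s a s', 0 ≤ P s a s')
    (hP1 : ∀ s a, ∑ s' : S, P s a s' = 1)
    (r : S → A → ℝ) (γ lam α : ℝ) (hγ : γ ∈ Set.Ioo (0 : ℝ) 1)
    (hlam : lam ∈ Set.Icc (0 : ℝ) 1) (hα : α ∈ Set.Ioo (0 : ℝ) 1)
    (Q₁ Q₂ : S → H → A → H → ℝ) :
    (⨆ x : S × H × A × H,
        |riskBellman H P r γ lam α Q₁ x.1 x.2.1 x.2.2.1 x.2.2.2 -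
          riskBellman H P r γ lam α Q₂ x.1 x.2.1 x.2.2.1 x.2.2.2|) ≤
      γ * ⨆ x : S × H × A × H,
        |Q₁ x.1 x.2.1 x.2.2.1 x.2.2.2 - Q₂ x.1 x.2.1 x.2.2.1 x.2.2.2| := by
  obtain ⟨hγ0, hγ1⟩ := hγ
  have hHne : Nonempty ↥H := hH.to_subtype
  set M := ⨆ x : S × H × A × H,
      |Q₁ x.1 x.2.1 x.2.2.1 x.2.2.2 - Q₂ x.1 x.2.1 x.2.2.1 x.2.2.2| with hMdef
  have hbdd : BddAbove (Set.range fun x : S × H × A × H =>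
      |Q₁ x.1 x.2.1 x.2.2.1 x.2.2.2 - Q₂ x.1 x.2.1 x.2.2.1 x.2.2.2|) :=
    Finite.bddAbove_range _
  have hMle : ∀ x : S × H × A × H,
      |Q₁ x.1 x.2.1 x.2.2.1 x.2.2.2 - Q₂ x.1 x.2.1 x.2.2.1 x.2.2.2| ≤ M :=
    fun x => le_ciSup hbdd x
  apply ciSup_le
  rintro ⟨s, η, a, η'⟩
  have hsup : ∀ s' : S,
      |(⨆ p : A × H, Q₁ s' η' p.1 p.2) - ⨆ p : A × H, Q₂ s' η' p.1 p.2| ≤ M := by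
    intro s'
    have hb1 : BddAbove (Set.range fun p : A × H => Q₁ s' η' p.1 p.2) :=
      Finite.bddAbove_range _
    have hb2 : BddAbove (Set.range fun p : A × H => Q₂ s' η' p.1 p.2) :=
      Finite.bddAbove_range _
    rw [abs_sub_le_iff]
    constructor
    · rw [sub_le_iff_le_add]
      apply ciSup_le
      intro p
      have h1 : Q₁ s' η' p.1 p.2 - Q₂ s' η' p.1 p.2 ≤ M :=
        le_trans (le_abs_self _) (hMle ⟨s', η', p.1, p.2⟩)
      have h2 : Q₂ s' η' p.1 p.2 ≤ ⨆ q : A × H, Q₂ s' η' q.1 q.2 := le_ciSup hb2 p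
      linarith
    · rw [sub_le_iff_le_add]
      apply ciSup_le
      intro p
      have h1 : Q₂ s' η' p.1 p.2 - Q₁ s' η' p.1 p.2 ≤ M :=
        le_trans (neg_le_abs _ |>.trans_eq' (by ring)) (hMle ⟨s', η', p.1, p.2⟩)
      have h2 : Q₁ s' η' p.1 p.2 ≤ ⨆ q : A × H, Q₁ s' η' q.1 q.2 := le_ciSup hb1 p
      linarith
  have key : riskBellman H P r γ lam α Q₁ s η a η' - riskBellman H P r γ lam α Q₂ s η a η'
      = γ * ∑ s' : S, P s a s' *
          ((⨆ p : A × H, Q₁ s' η' p.1 p.2) - ⨆ p : A × H, Q₂ s' η' p.1 p.2) := by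
    simp only [riskBellman, mul_sub, Finset.sum_sub_distrib]
    ring
  rw [key, abs_mul, abs_of_pos hγ0]
  have hin : |∑ s' : S, P s a s' *
      ((⨆ p : A × H, Q₁ s' η' p.1 p.2) - ⨆ p : A × H, Q₂ s' η' p.1 p.2)| ≤ M := by
    calc |∑ s' : S, P s a s' *
        ((⨆ p : A × H, Q₁ s' η' p.1 p.2) - ⨆ p : A × H, Q₂ s' η' p.1 p.2)|
        ≤ ∑ s' : S, |P s a s' *
          ((⨆ p : A × H, Q₁ s' η' p.1 p.2) - ⨆ p : A × H, Q₂ s' η' p.1 p.2)| :=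
          Finset.abs_sum_le_sum_abs _ _
      _ = ∑ s' : S, P s a s' *
          |(⨆ p : A × H, Q₁ s' η' p.1 p.2) - ⨆ p : A × H, Q₂ s' η' p.1 p.2| := by
          simp [abs_mul, abs_of_nonneg (hP0 s a _)]
      _ ≤ ∑ s' : S, P s a s' * M :=
          Finset.sum_le_sum fun s' _ => mul_le_mul_of_nonneg_left (hsup s') (hP0 s a s')
      _ = M := by rw [← Finset.sum_mul, hP1, one_mul]
  exact mul_le_mul_of_nonneg_left hin (le_of_lt hγ0)
end
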